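/- arXiv:2312.03149 — 2 statements merged into one kernel-verified Lean document; each statement's English description precedes it below -/
import Mathlib

section
/- Let G be a nut graph of order n whose automorphism group has exactly two orbits on the vertex set. Then n is not a prime number. -/
namespace NutPaper

open Matrix

variable {V : Type*}

open scoped Classical in
/-- The real adjacency matrix of a simple graph. -/
noncomputable def adjMat (G : SimpleGraph V) : Matrix V V ℝ :=
  Matrix.of fun u v => if G.Adj u v then (1 : ℝ) else 0

/-- A nut graph: the adjacency matrix has nullity exactly one, and every
nonzero kernel vector has all entries nonzero. -/
def IsNutGraph [Fintype V] (G : SimpleGraph V) : Prop :=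
  Module.finrank ℝ (LinearMap.ker (Matrix.mulVecLin (adjMat G))) = 1 ∧
  ∀ x : V → ℝ, adjMat G *ᵥ x = 0 → x ≠ 0 → ∀ v, x v ≠ 0

/-- The orbit of a vertex under the full automorphism group. -/
def vertexOrbit (G : SimpleGraph V) (v : V) : Set V :=
  {u | ∃ α : G ≃g G, α v = u}

/-- The set of vertex orbits. -/
def vertexOrbits (G : SimpleGraph V) : Set (Set V) :=
  Set.range (vertexOrbit G)

/-- The number of vertex orbits. -/
noncomputable def numVertexOrbits (G : SimpleGraph V) : ℕ :=
  Nat.card (vertexOrbits G)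

/-- The orbit of an edge under the full automorphism group. -/
def edgeOrbit (G : SimpleGraph V) (e : Sym2 V) : Set (Sym2 V) :=
  {f | ∃ α : G ≃g G, Sym2.map (⇑α) e = f}

/-- The set of edge orbits. -/
def edgeOrbits (G : SimpleGraph V) : Set (Set (Sym2 V)) :=
  edgeOrbit G '' G.edgeSet

/-- The number of edge orbits. -/
noncomputable def numEdgeOrbits (G : SimpleGraph V) : ℕ :=
  Nat.card (edgeOrbits G)

open scoped Classical

section Helpers

lemma mem_vertexOrbit_self (G : SimpleGraph V) (v : V) : v ∈ vertexOrbit G v :=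
  ⟨RelIso.refl _, rfl⟩

lemma vertexOrbit_eq_of_mem {G : SimpleGraph V} {u v : V} (h : u ∈ vertexOrbit G v) :
    vertexOrbit G u = vertexOrbit G v := by
  obtain ⟨α, rfl⟩ := h
  ext w
  constructor
  · rintro ⟨β, rfl⟩
    exact ⟨α.trans β, rfl⟩
  · rintro ⟨β, rfl⟩
    exact ⟨(RelIso.trans α.symm β : G ≃g G), by simp⟩

lemma apply_mem_vertexOrbit {G : SimpleGraph V} {u w : V} (α : G ≃g G)
    (h : u ∈ vertexOrbit G w) : α u ∈ vertexOrbit G w := by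
  rw [← vertexOrbit_eq_of_mem h]; exact ⟨α, rfl⟩

lemma mulVec_adjMat (G : SimpleGraph V) [Fintype V] (x : V → ℝ) (v : V) :
    (adjMat G *ᵥ x) v = ∑ u, if G.Adj v u then x u else 0 := by
  simp [Matrix.mulVec, dotProduct, adjMat, ite_mul]

lemma ker_comp {G : SimpleGraph V} [Fintype V] (α : G ≃g G) {x : V → ℝ}
    (hx : adjMat G *ᵥ x = 0) : adjMat G *ᵥ (fun v => x (α v)) = 0 := by
  funext v
  have h := congrFun hx (α v)
  rw [mulVec_adjMat] at h
  rw [mulVec_adjMat]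
  rw [← Equiv.sum_comp α.toEquiv (fun w => if G.Adj (α v) w then x w else 0)] at h
  simp only [Pi.zero_apply] at h ⊢
  have h2 : (∑ u, if G.Adj v u then x (α u) else 0)
      = ∑ i, if G.Adj (α v) (α.toEquiv i) then x (α.toEquiv i) else 0 :=
    Finset.sum_congr rfl fun u _ => by simp [α.map_adj_iff]
  rw [h2, h]

lemma abs_comp_eq {G : SimpleGraph V} [Fintype V]
    (h1 : Module.finrank ℝ (LinearMap.ker (Matrix.mulVecLin (adjMat G))) = 1)
    {x : V → ℝ} (hx : adjMat G *ᵥ x = 0) (hx0 : x ≠ 0) (α : G ≃g G) (v : V) :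
    |x (α v)| = |x v| := by
  set K := LinearMap.ker (Matrix.mulVecLin (adjMat G)) with hK
  obtain ⟨v0, hv0, hspan⟩ := (finrank_eq_one_iff' (K := ℝ) (V := K)).mp h1
  have hxK : x ∈ K := LinearMap.mem_ker.mpr (by simpa [Matrix.mulVecLin_apply] using hx)
  have hyK : (fun w => x (α w)) ∈ K :=
    LinearMap.mem_ker.mpr (by simpa [Matrix.mulVecLin_apply] using ker_comp α hx)
  obtain ⟨c1, hc1⟩ := hspan ⟨x, hxK⟩
  obtain ⟨c2, hc2⟩ := hspan ⟨_, hyK⟩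
  have hc1' : c1 • (v0 : V → ℝ) = x := congrArg Subtype.val hc1
  have hc2' : c2 • (v0 : V → ℝ) = fun w => x (α w) := congrArg Subtype.val hc2
  have hc1ne : c1 ≠ 0 := by
    rintro rfl
    rw [zero_smul] at hc1'
    exact hx0 hc1'.symm
  set c := c2 / c1 with hc
  have hy : (fun w => x (α w)) = c • x := by
    rw [← hc2', ← hc1', smul_smul, div_mul_cancel₀ _ hc1ne]
  have hpos : 0 < ∑ w, x w ^ 2 := by
    obtain ⟨w, hw⟩ := Function.ne_iff.mp hx0
    exact Finset.sum_pos' (fun i _ => sq_nonneg _)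
      ⟨w, Finset.mem_univ w, lt_of_le_of_ne (sq_nonneg _) (Ne.symm (pow_ne_zero 2 hw))⟩
  have hsum : ∑ w, x (α w) ^ 2 = ∑ w, x w ^ 2 := Equiv.sum_comp α.toEquiv (fun w => x w ^ 2)
  have hsum2 : ∑ w, x (α w) ^ 2 = c ^ 2 * ∑ w, x w ^ 2 := by
    have : ∀ w, x (α w) = c * x w := fun w => by
      have := congrFun hy w; simpa using this
    simp only [this, mul_pow, Finset.mul_sum]
  have hc2eq : c ^ 2 = 1 := by
    rw [hsum2] at hsum
    exact mul_right_cancel₀ (ne_of_gt hpos) (hsum.trans (one_mul _).symm)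
  have habs : |c| = 1 := by
    have hfac : (c - 1) * (c + 1) = 0 := by linear_combination hc2eq
    rcases mul_eq_zero.mp hfac with h | h
    · simp [show c = 1 by linarith]
    · simp [show c = -1 by linarith]
  have hxv : x (α v) = c * x v := by simpa using congrFun hy v
  rw [hxv, abs_mul, habs, one_mul]

lemma card_filter_adj_comp {G : SimpleGraph V} [Fintype V] (α : G ≃g G)
    (s : Finset V) (hs : ∀ w, w ∈ s ↔ α w ∈ s) (u : V) :
    (s.filter (fun w => G.Adj (α u) w)).card = (s.filter (fun w => G.Adj u w)).card := by
  apply Finset.card_bij' (fun w _ => α.symm w) (fun w _ => α w)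
  · intro w hw
    simp only [Finset.mem_filter] at hw ⊢
    constructor
    · rw [hs (α.symm w)]
      simpa using hw.1
    · have h2 := α.symm.map_adj_iff (v := α u) (w := w)
      rw [RelIso.symm_apply_apply] at h2
      exact h2.mpr hw.2
  · intro w hw
    simp only [Finset.mem_filter] at hw ⊢
    refine ⟨(hs w).mp hw.1, ?_⟩
    exact α.map_adj_iff.mpr hw.2
  · intro w hw; simp
  · intro w hw; simp

lemma kernel_orbit_sum {G : SimpleGraph V} [Fintype V] {x : V → ℝ}
    (hx : adjMat G *ᵥ x = 0) (t : Finset V) :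
    ∑ u, ((t.filter (fun w => G.Adj u w)).card : ℝ) * x u = 0 := by
  have h0 : ∑ v ∈ t, (adjMat G *ᵥ x) v = 0 := by simp [hx]
  calc ∑ u, ((t.filter (fun w => G.Adj u w)).card : ℝ) * x u
      = ∑ u, ∑ v ∈ t, (if G.Adj v u then x u else 0) := by
        refine Finset.sum_congr rfl fun u _ => ?_
        rw [← Finset.sum_filter, Finset.sum_const, nsmul_eq_mul,
          show t.filter (fun v => G.Adj v u) = t.filter (fun w => G.Adj u w) from
            Finset.filter_congr fun v _ => (G.adj_comm v u)]
    _ = ∑ v ∈ t, ∑ u, (if G.Adj v u then x u else 0) := Finset.sum_comm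
    _ = ∑ v ∈ t, (adjMat G *ᵥ x) v :=
        Finset.sum_congr rfl fun v _ => (mulVec_adjMat G x v).symm
    _ = 0 := h0

lemma even_card_of_sum_zero {t : Finset V} {x : V → ℝ} {a : ℝ} (ha : a ≠ 0)
    (habs : ∀ v ∈ t, |x v| = a) (hsum : ∑ v ∈ t, x v = 0) : Even t.card := by
  set P := t.filter (fun v => 0 < x v) with hP
  set M := t.filter (fun v => x v < 0) with hM
  have hdisj : Disjoint P M :=
    Finset.disjoint_filter.mpr fun v _ hp hq => absurd hq (not_lt.mpr hp.le)
  have hunion : P ∪ M = t := by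
    ext v
    simp only [Finset.mem_union, hP, hM, Finset.mem_filter]
    constructor
    · rintro (h | h) <;> exact h.1
    · intro hv
      have hxne : x v ≠ 0 := fun h0 => ha (by rw [← habs v hv, h0, abs_zero])
      rcases hxne.lt_or_gt with h | h
      · exact Or.inr ⟨hv, h⟩
      · exact Or.inl ⟨hv, h⟩
  have hsumP : ∑ v ∈ P, x v = P.card * a := by
    have hc : ∀ v ∈ P, x v = a := fun v hv => by
      simp only [hP, Finset.mem_filter] at hv
      rw [← habs v hv.1, abs_of_pos hv.2]
    rw [Finset.sum_congr rfl hc, Finset.sum_const, nsmul_eq_mul]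
  have hsumM : ∑ v ∈ M, x v = -(M.card * a) := by
    have hc : ∀ v ∈ M, x v = -a := fun v hv => by
      simp only [hM, Finset.mem_filter] at hv
      have h1 := habs v hv.1
      have h2 := abs_of_neg hv.2
      linarith [h1, h2.symm.trans h1]
    rw [Finset.sum_congr rfl hc, Finset.sum_const, nsmul_eq_mul]
    ring
  have hPM : (P.card : ℝ) = M.card := by
    have hs := hsum
    rw [← hunion, Finset.sum_union hdisj, hsumP, hsumM] at hs
    have hz : ((P.card : ℝ) - M.card) * a = 0 := by ring_nf; linarith
    rcases mul_eq_zero.mp hz with h | h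
    · linarith
    · exact absurd h ha
  have hPMn : P.card = M.card := Nat.cast_injective hPM
  rw [← hunion, Finset.card_union_of_disjoint hdisj, hPMn]
  exact ⟨M.card, rfl⟩

end Helpers

/-- The order of a nut graph with exactly two vertex orbits
is never a prime number. -/
theorem order_not_prime_of_two_vertexOrbits {V : Type*} [Fintype V]
    (G : SimpleGraph V) (hG : IsNutGraph G)
    (h2 : numVertexOrbits G = 2) :
    ¬ (Fintype.card V).Prime := by
  intro hp
  obtain ⟨h1, hnut⟩ := hG
  -- extract the two orbits
  have hcard2 : (vertexOrbits G).ncard = 2 := by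
    rw [← Nat.card_coe_set_eq]; exact h2
  obtain ⟨O1, O2, hO12ne, hOrbs⟩ := Set.ncard_eq_two.mp hcard2
  have hO1mem : O1 ∈ Set.range (vertexOrbit G) := by
    show O1 ∈ vertexOrbits G
    rw [hOrbs]; exact Set.mem_insert _ _
  have hO2mem : O2 ∈ Set.range (vertexOrbit G) := by
    show O2 ∈ vertexOrbits G
    rw [hOrbs]; exact Set.mem_insert_of_mem _ rfl
  obtain ⟨v1, hv1⟩ := hO1mem
  obtain ⟨v2, hv2⟩ := hO2mem
  have hv1O : v1 ∈ O1 := hv1 ▸ mem_vertexOrbit_self G v1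
  have hv2O : v2 ∈ O2 := hv2 ▸ mem_vertexOrbit_self G v2
  have hcover : ∀ v, v ∈ O1 ∨ v ∈ O2 := by
    intro v
    have hmem : vertexOrbit G v ∈ vertexOrbits G := Set.mem_range_self v
    rw [hOrbs] at hmem
    simp only [Set.mem_insert_iff, Set.mem_singleton_iff] at hmem
    rcases hmem with h | h
    · exact Or.inl (h ▸ mem_vertexOrbit_self G v)
    · exact Or.inr (h ▸ mem_vertexOrbit_self G v)
  have hdisj : ∀ v, v ∈ O1 → v ∈ O2 → False := by
    intro v p1 p2
    have e1 : vertexOrbit G v = O1 := by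
      rw [← hv1]; exact vertexOrbit_eq_of_mem (by rw [hv1]; exact p1)
    have e2 : vertexOrbit G v = O2 := by
      rw [← hv2]; exact vertexOrbit_eq_of_mem (by rw [hv2]; exact p2)
    exact hO12ne (e1.symm.trans e2)
  have hinv1 : ∀ (α : G ≃g G) u, u ∈ O1 ↔ α u ∈ O1 := by
    intro α u
    constructor
    · intro hu; rw [← hv1] at hu ⊢; exact apply_mem_vertexOrbit α hu
    · intro hu
      have h := apply_mem_vertexOrbit (α := α.symm) (by rw [← hv1] at hu; exact hu)
      rw [RelIso.symm_apply_apply] at h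
      rw [← hv1]; exact h
  have hinv2 : ∀ (α : G ≃g G) u, u ∈ O2 ↔ α u ∈ O2 := by
    intro α u
    constructor
    · intro hu; rw [← hv2] at hu ⊢; exact apply_mem_vertexOrbit α hu
    · intro hu
      have h := apply_mem_vertexOrbit (α := α.symm) (by rw [← hv2] at hu; exact hu)
      rw [RelIso.symm_apply_apply] at h
      rw [← hv2]; exact h
  -- finsets
  set t1 : Finset V := O1.toFinset with ht1
  set t2 : Finset V := O2.toFinset with ht2
  have hm1 : ∀ v, v ∈ t1 ↔ v ∈ O1 := fun v => Set.mem_toFinset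
  have hm2 : ∀ v, v ∈ t2 ↔ v ∈ O2 := fun v => Set.mem_toFinset
  have hdisjF : Disjoint t1 t2 := by
    rw [Finset.disjoint_left]
    intro v hva hvb
    exact hdisj v ((hm1 v).mp hva) ((hm2 v).mp hvb)
  have huniv : t1 ∪ t2 = Finset.univ := by
    ext v
    simp only [Finset.mem_union, Finset.mem_univ, iff_true, hm1, hm2]
    exact hcover v
  have hn : Fintype.card V = t1.card + t2.card := by
    rw [← Finset.card_univ, ← huniv, Finset.card_union_of_disjoint hdisjF]
  have hn1pos : 0 < t1.card := Finset.card_pos.mpr ⟨v1, (hm1 v1).mpr hv1O⟩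
  have hn2pos : 0 < t2.card := Finset.card_pos.mpr ⟨v2, (hm2 v2).mpr hv2O⟩
  have hsinv1 : ∀ (α : G ≃g G) (w : V), w ∈ t1 ↔ α w ∈ t1 := fun α w => by
    rw [hm1, hm1]; exact hinv1 α w
  have hsinv2 : ∀ (α : G ≃g G) (w : V), w ∈ t2 ↔ α w ∈ t2 := fun α w => by
    rw [hm2, hm2]; exact hinv2 α w
  -- kernel vector
  obtain ⟨x0, hx0ne, _⟩ :=
    (finrank_eq_one_iff' (K := ℝ)
      (V := (LinearMap.ker (Matrix.mulVecLin (adjMat G))))).mp h1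
  set x : V → ℝ := (x0 : V → ℝ) with hxdef
  have hx : adjMat G *ᵥ x = 0 := by
    have h := LinearMap.mem_ker.mp x0.2
    rw [Matrix.mulVecLin_apply] at h
    exact h
  have hx0 : x ≠ 0 := by
    simp only [hxdef, ne_eq, ZeroMemClass.coe_eq_zero]
    exact hx0ne
  have hvne : ∀ v, x v ≠ 0 := hnut x hx hx0
  have habsO1 : ∀ v ∈ t1, |x v| = |x v1| := by
    intro v hv
    have hv' : v ∈ vertexOrbit G v1 := by rw [hv1]; exact (hm1 v).mp hv
    obtain ⟨α, rfl⟩ := hv'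
    exact abs_comp_eq h1 hx hx0 α v1
  have habsO2 : ∀ v ∈ t2, |x v| = |x v2| := by
    intro v hv
    have hv' : v ∈ vertexOrbit G v2 := by rw [hv2]; exact (hm2 v).mp hv
    obtain ⟨α, rfl⟩ := hv'
    exact abs_comp_eq h1 hx hx0 α v2
  -- degree constancy on orbits
  have hconst1 : ∀ (s : Finset V), (∀ (α : G ≃g G) (w : V), w ∈ s ↔ α w ∈ s) →
      ∀ u ∈ t1, (s.filter (fun w => G.Adj u w)).card
        = (s.filter (fun w => G.Adj v1 w)).card := by
    intro s hs u hu
    have hu' : u ∈ vertexOrbit G v1 := by rw [hv1]; exact (hm1 u).mp hu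
    obtain ⟨α, rfl⟩ := hu'
    exact card_filter_adj_comp α s (fun w => hs α w) v1
  have hconst2 : ∀ (s : Finset V), (∀ (α : G ≃g G) (w : V), w ∈ s ↔ α w ∈ s) →
      ∀ u ∈ t2, (s.filter (fun w => G.Adj u w)).card
        = (s.filter (fun w => G.Adj v2 w)).card := by
    intro s hs u hu
    have hu' : u ∈ vertexOrbit G v2 := by rw [hv2]; exact (hm2 u).mp hu
    obtain ⟨α, rfl⟩ := hu'
    exact card_filter_adj_comp α s (fun w => hs α w) v2
  -- orbit sums of the kernel vector
  set S1 : ℝ := ∑ v ∈ t1, x v with hS1def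
  set S2 : ℝ := ∑ v ∈ t2, x v with hS2def
  have hsplit : ∀ s : Finset V, (∀ (α : G ≃g G) (w : V), w ∈ s ↔ α w ∈ s) →
      ((s.filter (fun w => G.Adj v1 w)).card : ℝ) * S1
        + ((s.filter (fun w => G.Adj v2 w)).card : ℝ) * S2 = 0 := by
    intro s hs
    have h0 := kernel_orbit_sum hx s
    rw [← huniv, Finset.sum_union hdisjF] at h0
    have e1 : ∑ u ∈ t1, ((s.filter (fun w => G.Adj u w)).card : ℝ) * x u
        = ((s.filter (fun w => G.Adj v1 w)).card : ℝ) * S1 := by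
      rw [hS1def, Finset.mul_sum]
      exact Finset.sum_congr rfl fun u hu => by rw [hconst1 s hs u hu]
    have e2 : ∑ u ∈ t2, ((s.filter (fun w => G.Adj u w)).card : ℝ) * x u
        = ((s.filter (fun w => G.Adj v2 w)).card : ℝ) * S2 := by
      rw [hS2def, Finset.mul_sum]
      exact Finset.sum_congr rfl fun u hu => by rw [hconst2 s hs u hu]
    rw [e1, e2] at h0
    exact h0
  have eqA := hsplit t1 hsinv1
  have eqB := hsplit t2 hsinv2
  set d11 := (t1.filter (fun w => G.Adj v1 w)).card with hd11
  set d12 := (t2.filter (fun w => G.Adj v1 w)).card with hd12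
  set d21 := (t1.filter (fun w => G.Adj v2 w)).card with hd21
  set d22 := (t2.filter (fun w => G.Adj v2 w)).card with hd22
  -- edge double counting
  have hcount : t1.card * d12 = t2.card * d21 := by
    have lhs : ∑ u ∈ t1, (t2.filter (fun w => G.Adj u w)).card = t1.card * d12 := by
      rw [Finset.sum_congr rfl (fun u hu => hconst1 t2 hsinv2 u hu), Finset.sum_const,
        smul_eq_mul]
    have rhs : ∑ u ∈ t2, (t1.filter (fun w => G.Adj u w)).card = t2.card * d21 := by
      rw [Finset.sum_congr rfl (fun u hu => hconst2 t1 hsinv1 u hu), Finset.sum_const,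
        smul_eq_mul]
    have key : ∑ u ∈ t1, (t2.filter (fun w => G.Adj u w)).card
        = ∑ w ∈ t2, (t1.filter (fun u => G.Adj w u)).card := by
      calc ∑ u ∈ t1, (t2.filter (fun w => G.Adj u w)).card
          = ∑ u ∈ t1, ∑ w ∈ t2, (if G.Adj u w then 1 else 0) :=
            Finset.sum_congr rfl fun u _ => Finset.card_filter _ _
        _ = ∑ w ∈ t2, ∑ u ∈ t1, (if G.Adj u w then 1 else 0) := Finset.sum_comm
        _ = ∑ w ∈ t2, (t1.filter (fun u => G.Adj w u)).card := by
            refine Finset.sum_congr rfl fun w _ => ?_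
            rw [Finset.card_filter]
            exact Finset.sum_congr rfl fun u _ => if_congr (G.adj_comm u w) rfl rfl
    rw [← lhs, key, rhs]
  -- there is an edge between the two orbits
  have hd12pos : 0 < d12 := by
    rcases Nat.eq_zero_or_pos d12 with h0 | h
    · exfalso
      have hno1 : ∀ u ∈ t1, ∀ w ∈ t2, ¬ G.Adj u w := by
        intro u hu w hw hadj
        have hc := hconst1 t2 hsinv2 u hu
        rw [← hd12, h0, Finset.card_eq_zero] at hc
        exact absurd (Finset.mem_filter.mpr ⟨hw, hadj⟩) (by rw [hc]; exact Finset.notMem_empty w)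
      set y : V → ℝ := fun v => if v ∈ t1 then x v else 0 with hydef
      have hyt1 : ∀ u ∈ t1, y u = x u := fun u hu => if_pos hu
      have hyt2 : ∀ u ∈ t2, y u = 0 := fun u hu =>
        if_neg (fun h => Finset.disjoint_left.mp hdisjF h hu)
      have hy : adjMat G *ᵥ y = 0 := by
        funext v
        rw [mulVec_adjMat]
        simp only [Pi.zero_apply]
        rw [← huniv, Finset.sum_union hdisjF]
        have hz2 : ∑ u ∈ t2, (if G.Adj v u then y u else 0) = 0 :=
          Finset.sum_eq_zero fun u hu => by rw [hyt2 u hu, ite_self]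
        rcases Finset.mem_union.mp (huniv ▸ Finset.mem_univ v : v ∈ t1 ∪ t2) with hv | hv
        · have hx0' := congrFun hx v
          rw [mulVec_adjMat] at hx0'
          simp only [Pi.zero_apply] at hx0'
          rw [← huniv, Finset.sum_union hdisjF] at hx0'
          have hzx2 : ∑ u ∈ t2, (if G.Adj v u then x u else 0) = 0 :=
            Finset.sum_eq_zero fun u hu => if_neg (hno1 v hv u hu)
          have h1' : ∑ u ∈ t1, (if G.Adj v u then y u else 0)
              = ∑ u ∈ t1, (if G.Adj v u then x u else 0) :=
            Finset.sum_congr rfl fun u hu => by rw [hyt1 u hu]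
          rw [hz2, h1', add_zero]
          linarith [hx0', hzx2]
        · have hz1 : ∑ u ∈ t1, (if G.Adj v u then y u else 0) = 0 :=
            Finset.sum_eq_zero fun u hu =>
              if_neg (fun hadj => hno1 u hu v hv hadj.symm)
          rw [hz1, hz2, add_zero]
      have hyne : y ≠ 0 := by
        intro h
        have hv1' := congrFun h v1
        rw [hyt1 v1 ((hm1 v1).mpr hv1O)] at hv1'
        exact hvne v1 hv1'
      exact (hnut y hy hyne v2) (hyt2 v2 ((hm2 v2).mpr hv2O))
    · exact h
  have hd21pos : 0 < d21 := by
    rcases Nat.eq_zero_or_pos d21 with h0 | h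
    · exfalso
      rw [h0, Nat.mul_zero] at hcount
      have := Nat.mul_pos hn1pos hd12pos
      omega
    · exact h
  -- coprimality from primality
  have hgcd : Nat.gcd t1.card t2.card ∣ Fintype.card V := by
    rw [hn]; exact Nat.dvd_add (Nat.gcd_dvd_left _ _) (Nat.gcd_dvd_right _ _)
  have hcop : Nat.Coprime t1.card t2.card := by
    rcases Nat.Prime.eq_one_or_self_of_dvd hp _ hgcd with h | h
    · exact h
    · exfalso
      have hle : Nat.gcd t1.card t2.card ≤ t1.card := Nat.le_of_dvd hn1pos (Nat.gcd_dvd_left _ _)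
      omega
  have hd21eq : d21 = t1.card := by
    have hdvd' : t1.card ∣ d21 := hcop.dvd_of_dvd_mul_left ⟨d12, hcount.symm⟩
    have hle : d21 ≤ t1.card := by rw [hd21]; exact Finset.card_filter_le _ _
    exact Nat.le_antisymm hle (Nat.le_of_dvd hd21pos hdvd')
  have hd12eq : d12 = t2.card := by
    have hdvd' : t2.card ∣ d12 := hcop.symm.dvd_of_dvd_mul_left ⟨d21, hcount⟩
    have hle : d12 ≤ t2.card := by rw [hd12]; exact Finset.card_filter_le _ _
    exact Nat.le_antisymm hle (Nat.le_of_dvd hd12pos hdvd')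
  -- strict degree bounds
  have hd11lt : d11 < t1.card := by
    have hsub : t1.filter (fun w => G.Adj v1 w) ⊆ t1.erase v1 := by
      intro w hw
      have hw' := Finset.mem_filter.mp hw
      exact Finset.mem_erase.mpr ⟨(G.ne_of_adj hw'.2).symm, hw'.1⟩
    calc d11 ≤ (t1.erase v1).card := by rw [hd11]; exact Finset.card_le_card hsub
      _ < t1.card := Finset.card_erase_lt_of_mem ((hm1 v1).mpr hv1O)
  have hd22lt : d22 < t2.card := by
    have hsub : t2.filter (fun w => G.Adj v2 w) ⊆ t2.erase v2 := by
      intro w hw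
      have hw' := Finset.mem_filter.mp hw
      exact Finset.mem_erase.mpr ⟨(G.ne_of_adj hw'.2).symm, hw'.1⟩
    calc d22 ≤ (t2.erase v2).card := by rw [hd22]; exact Finset.card_le_card hsub
      _ < t2.card := Finset.card_erase_lt_of_mem ((hm2 v2).mpr hv2O)
  -- solve the linear system: both orbit sums vanish
  rw [hd21eq] at eqA
  rw [hd12eq] at eqB
  have hdetlt : (d11 : ℝ) * d22 < (t1.card : ℝ) * t2.card := by
    have a1 : (d11 : ℝ) < t1.card := by exact_mod_cast hd11lt
    have a2 : (d22 : ℝ) < t2.card := by exact_mod_cast hd22lt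
    have a3 : (0 : ℝ) ≤ d11 := Nat.cast_nonneg _
    have a4 : (0 : ℝ) ≤ d22 := Nat.cast_nonneg _
    nlinarith
  have hS1 : S1 = 0 := by
    have hz : ((d11 : ℝ) * d22 - (t1.card : ℝ) * t2.card) * S1 = 0 := by
      linear_combination (d22 : ℝ) * eqA - (t1.card : ℝ) * eqB
    rcases mul_eq_zero.mp hz with h | h
    · exfalso; linarith
    · exact h
  have hS2 : S2 = 0 := by
    have hn1R : (0 : ℝ) < t1.card := by exact_mod_cast hn1pos
    have hz : (t1.card : ℝ) * S2 = 0 := by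
      rw [hS1] at eqA; linarith [eqA]
    rcases mul_eq_zero.mp hz with h | h
    · exfalso; linarith
    · exact h
  -- parity
  have hev1 : Even t1.card := even_card_of_sum_zero (abs_ne_zero.mpr (hvne v1)) habsO1 hS1
  have hev2 : Even t2.card := even_card_of_sum_zero (abs_ne_zero.mpr (hvne v2)) habsO2 hS2
  have h2n : Fintype.card V = 2 :=
    (Nat.Prime.even_iff hp).mp (by rw [hn]; exact hev1.add hev2)
  obtain ⟨a, ha⟩ := hev1
  obtain ⟨b, hb⟩ := hev2
  omega

end NutPaper
end

section
/- Let G be a nut graph of odd order n and let x be a nonzero kernel vector of the adjacency matrix of G. Then Aut(G) contains no sign-reversing automorphism (no automorphism α with x^α = −x), and the entries of x are constant within each vertex orbit of G. -/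
namespace NutPaper

open Matrix

variable {V : Type*}

/-! The kernel is a line stable under `x ↦ x ∘ α` for every automorphism `α`, and permuting
coordinates preserves `x ⬝ᵥ x`, so `x ∘ α = ± x`. The sign `-` is impossible when the order is
odd: `α` would map the vertices where `x` is positive bijectively onto those where it is
negative, and since `x` has no zero entries these two sets would split the vertex set evenly. -/

lemma adjMat_mulVec_comp_iso {W : Type*} [Fintype V] [Fintype W] {G : SimpleGraph V}
    {H : SimpleGraph W} (α : G ≃g H) (x : W → ℝ) :
    adjMat G *ᵥ (x ∘ α) = (adjMat H *ᵥ x) ∘ α := by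
  funext u
  exact Fintype.sum_equiv α.toEquiv _ _ fun v => by
    rw [show α.toEquiv v = α v from rfl]
    simp only [adjMat, of_apply, Function.comp_apply]
    rw [α.map_adj_iff]

lemma even_card_of_forall_apply_perm_eq_neg [Fintype V] {x : V → ℝ} (hx : ∀ v, x v ≠ 0)
    (σ : Equiv.Perm V) (hσ : ∀ v, x (σ v) = -x v) : Even (Fintype.card V) := by
  classical
  have hσ_symm : ∀ v, x (σ.symm v) = -x v := fun v => by
    simpa using congrArg Neg.neg (hσ (σ.symm v)).symm
  have hcard : (Finset.univ.filter fun v => 0 < x v).card =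
      (Finset.univ.filter fun v => ¬ 0 < x v).card := by
    refine Finset.card_nbij' σ σ.symm (fun v hv => ?_) (fun v hv => ?_) (fun v _ => by simp)
      (fun v _ => by simp)
    · simp only [Finset.coe_filter, Finset.mem_univ, true_and, Set.mem_ofPred_eq] at hv ⊢
      linarith [hσ v]
    · simp only [Finset.coe_filter, Finset.mem_univ, true_and, Set.mem_ofPred_eq] at hv ⊢
      linarith [hσ_symm v, (not_lt.mp hv).lt_of_ne (hx v)]
  rw [← Finset.card_univ, ← Finset.card_filter_add_card_filter_not (fun v => 0 < x v), hcard]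
  exact ⟨_, rfl⟩

lemma eq_one_or_eq_neg_one_of_comp_perm_eq_smul [Fintype V] {x : V → ℝ} (hx : x ≠ 0)
    {σ : Equiv.Perm V} {c : ℝ} (h : x ∘ σ = c • x) : c = 1 ∨ c = -1 := by
  have hself : (x ∘ σ) ⬝ᵥ (x ∘ σ) = x ⬝ᵥ x := by
    simp only [dotProduct, Function.comp_apply]
    exact Equiv.sum_comp σ fun v => x v * x v
  rw [h, smul_dotProduct, dotProduct_smul, smul_smul, smul_eq_mul] at hself
  exact mul_self_eq_one_iff.mp <|
    (mul_eq_right₀ (mt dotProduct_self_eq_zero.mp hx)).mp hself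

lemma Submodule.comp_perm_eq_or_eq_neg_of_finrank_eq_one [Fintype V]
    {K : Submodule ℝ (V → ℝ)} (hK : Module.finrank ℝ K = 1) {x : V → ℝ} (hxK : x ∈ K)
    (hx : x ≠ 0) {σ : Equiv.Perm V} (hσK : x ∘ σ ∈ K) : x ∘ σ = x ∨ x ∘ σ = -x := by
  obtain ⟨c, hc⟩ := (finrank_eq_one_iff_of_nonzero' (⟨x, hxK⟩ : K) (by simpa using hx)).mp hK
    ⟨x ∘ σ, hσK⟩
  have hc' : x ∘ σ = c • x := (congrArg Subtype.val hc).symm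
  rcases eq_one_or_eq_neg_one_of_comp_perm_eq_smul hx hc' with rfl | rfl
  · exact .inl (by simpa using hc')
  · exact .inr (by simpa using hc')

/-- A nut graph of odd order has no sign-reversing
automorphism, and the kernel-vector entries are constant on each vertex
orbit. -/
theorem nut_oddOrder_no_signReversing {V : Type*} [Fintype V]
    (G : SimpleGraph V) (hG : IsNutGraph G)
    (hodd : Odd (Fintype.card V))
    (x : V → ℝ) (hker : adjMat G *ᵥ x = 0) (hx : x ≠ 0) :
    (¬ ∃ α : G ≃g G, ∀ v : V, x (α v) = -x v) ∧
    (∀ u v : V, (∃ α : G ≃g G, α u = v) → x u = x v) := by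
  have hno : ¬ ∃ α : G ≃g G, ∀ v : V, x (α v) = -x v := fun ⟨α, hα⟩ =>
    Nat.not_even_iff_odd.mpr hodd
      (even_card_of_forall_apply_perm_eq_neg (hG.2 x hker hx) α.toEquiv hα)
  refine ⟨hno, ?_⟩
  rintro u - ⟨α, rfl⟩
  have hαker : adjMat G *ᵥ (x ∘ α) = 0 := by
    rw [adjMat_mulVec_comp_iso, hker]
    rfl
  rcases Submodule.comp_perm_eq_or_eq_neg_of_finrank_eq_one (σ := α.toEquiv) hG.1
      (by simpa using hker) hx (by simpa using hαker) with h | h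
  · exact (congrFun h u).symm
  · exact absurd ⟨α, congrFun h⟩ hno

end NutPaper
end
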